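/- Van Luijk's rank argument: Let L be a free ℤ-module, and suppose there are injective homomorphisms s₁ : L → N₁ and s₂ : L → N₂ into free ℤ-modules N₁, N₂ each of rank 2. Suppose further that any finite-index subgroup of N₁ has discriminant equal to −3 times a square in ℚ^×, while any finite-index subgroup of N₂ has discriminant −1 times a square, where the discriminant is taken with respect to fixed symmetric bilinear forms on N₁ and N₂ compatible with a fixed symmetric bilinear form on L via s₁, s₂. Then rank L ≤ 1. -/
import Mathlib



theorem aux_no_sqrt3 (q : ℚ) (h : q ^ 2 = 3) : False := by
  have : IsSquare ((3:ℕ) : ℚ) := ⟨q, by push_cast [← h]; ring⟩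
  rw [Rat.isSquare_natCast_iff] at this
  obtain ⟨r, hr⟩ := this
  have : r ≤ 3 := by nlinarith
  interval_cases r <;> omega

/-- Van Luijk's rank argument: if a free `ℤ`-module `L` with a symmetric bilinear
form embeds compatibly into two rank-2 lattices `N₁`, `N₂`, every finite-index
sublattice of `N₁` having discriminant `−3` times a nonzero rational square and
every finite-index sublattice of `N₂` having discriminant `−1` times a nonzero
rational square, then `rank L ≤ 1`. -/
theorem van_luijk_rank (L N₁ N₂ : Type*)
    [AddCommGroup L] [Module ℤ L] [Module.Free ℤ L] [Module.Finite ℤ L]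
    [AddCommGroup N₁] [Module ℤ N₁] [Module.Free ℤ N₁] [Module.Finite ℤ N₁]
    [AddCommGroup N₂] [Module ℤ N₂] [Module.Free ℤ N₂] [Module.Finite ℤ N₂]
    (hN₁ : Module.finrank ℤ N₁ = 2) (hN₂ : Module.finrank ℤ N₂ = 2)
    (s₁ : L →+ N₁) (s₂ : L →+ N₂)
    (hs₁ : Function.Injective s₁) (hs₂ : Function.Injective s₂)
    (B : L → L → ℤ) (B₁ : N₁ → N₁ → ℤ) (B₂ : N₂ → N₂ → ℤ)
    (hBsymm : ∀ x y, B x y = B y x)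
    (hB₁symm : ∀ x y, B₁ x y = B₁ y x) (hB₂symm : ∀ x y, B₂ x y = B₂ y x)
    (hcompat₁ : ∀ x y, B₁ (s₁ x) (s₁ y) = B x y)
    (hcompat₂ : ∀ x y, B₂ (s₂ x) (s₂ y) = B x y)
    (hdisc₁ : ∀ v w : N₁, LinearIndependent ℤ ![v, w] →
      ∃ t : ℚ, t ≠ 0 ∧ ((B₁ v v * B₁ w w - (B₁ v w) ^ 2 : ℤ) : ℚ) = t ^ 2 * (-3))
    (hdisc₂ : ∀ v w : N₂, LinearIndependent ℤ ![v, w] →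
      ∃ t : ℚ, t ≠ 0 ∧ ((B₂ v v * B₂ w w - (B₂ v w) ^ 2 : ℤ) : ℚ) = t ^ 2 * (-1)) :
    Module.finrank ℤ L ≤ 1 := by
  by_contra hrk
  push_neg at hrk
  -- get two independent vectors in L
  set b := Module.Free.chooseBasis ℤ L with hb
  have hcard : 2 ≤ Fintype.card (Module.Free.ChooseBasisIndex ℤ L) := by
    rwa [← Module.finrank_eq_card_chooseBasisIndex ℤ L]
  obtain ⟨i, j, hij⟩ := Fintype.exists_pair_of_one_lt_card hcard
  have hli : LinearIndependent ℤ ![b i, b j] := by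
    have h1 : Function.Injective (![i, j] : Fin 2 → _) := by
      intro a c hac
      fin_cases a <;> fin_cases c <;> simp_all
    have := b.linearIndependent.comp ![i, j] h1
    have heq : (⇑b ∘ ![i, j]) = ![b i, b j] := by
      funext a; fin_cases a <;> simp
    rwa [heq] at this
  -- push through s₁ and s₂
  have key₁ : LinearIndependent ℤ ![s₁ (b i), s₁ (b j)] := by
    let f : L →ₗ[ℤ] N₁ :=
      { toFun := s₁, map_add' := s₁.map_add,
        map_smul' := fun c x => by simpa using map_intCast_smul s₁ ℤ ℤ c x }
    have hker : LinearMap.ker f = ⊥ := by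
      rw [LinearMap.ker_eq_bot]; exact hs₁
    have := hli.map' f hker
    have heq : (⇑f ∘ ![b i, b j]) = ![s₁ (b i), s₁ (b j)] := by
      funext a; fin_cases a <;> simp [f]
    rwa [heq] at this
  have key₂ : LinearIndependent ℤ ![s₂ (b i), s₂ (b j)] := by
    let f : L →ₗ[ℤ] N₂ :=
      { toFun := s₂, map_add' := s₂.map_add,
        map_smul' := fun c x => by simpa using map_intCast_smul s₂ ℤ ℤ c x }
    have hker : LinearMap.ker f = ⊥ := by
      rw [LinearMap.ker_eq_bot]; exact hs₂
    have := hli.map' f hker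
    have heq : (⇑f ∘ ![b i, b j]) = ![s₂ (b i), s₂ (b j)] := by
      funext a; fin_cases a <;> simp [f]
    rwa [heq] at this
  obtain ⟨t, ht0, ht⟩ := hdisc₁ (s₁ (b i)) (s₁ (b j)) key₁
  obtain ⟨u, hu0, hu⟩ := hdisc₂ (s₂ (b i)) (s₂ (b j)) key₂
  rw [hcompat₁, hcompat₁, hcompat₁] at ht
  rw [hcompat₂, hcompat₂, hcompat₂] at hu
  have h3 : (u / t) ^ 2 = 3 := by
    field_simp
    nlinarith [ht.symm.trans hu]
  exact aux_no_sqrt3 _ h3
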